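/- arXiv:2506.11310 — 7 statements merged into one kernel-verified Lean document; each statement's English description precedes it below -/
import Mathlib

section
/- If M is a finite abelian group whose holomorph Hol M equals the full symmetric group Sym M (i.e., every bijection of M is affine-linear), then M is trivial, cyclic of order 2, cyclic of order 3, or isomorphic to C2 × C2. -/
/-!
If every permutation of `M` is affine, then every permutation fixing `0` is additive. Applying
this to a transposition `(u v)` of two nonzero elements and to a point `x ∉ {0, u, v, v - u}`
gives `u + x = v + x`, so `M ⊆ {0, u, v, v - u}` and `|M| ≤ 4`. Applying it to `(u 2u)` shows
that an element with `2u ≠ 0` satisfies `3u = 0`, which rules out `ℤ/4`; the remaining groups of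
order at most four are the four listed ones.
-/

def PermsAreAffine (M : Type*) [AddCommGroup M] : Prop :=
  ∀ π : Equiv.Perm M, ∃ (a : AddAut M) (t : M), ∀ x, π x = a x + t

namespace PermsAreAffine

variable {M : Type*} [AddCommGroup M]

lemma map_add (h : PermsAreAffine M) {π : Equiv.Perm M} (hπ : π 0 = 0) (x y : M) :
    π (x + y) = π x + π y := by
  obtain ⟨a, t, ha⟩ := h π
  have ht : t = 0 := by simpa [hπ] using (ha 0).symm
  simp [ha, ht]

lemma three_nsmul_eq_zero (h : PermsAreAffine M) {u : M} (hu : u ≠ 0) (h2u : u + u ≠ 0) :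
    3 • u = 0 := by
  classical
  have hσ0 : Equiv.swap u (u + u) 0 = 0 :=
    Equiv.swap_apply_of_ne_of_ne (Ne.symm hu) (Ne.symm h2u)
  have key : u = u + u + (u + u) := by
    simpa using h.map_add hσ0 u u
  calc 3 • u = u + u + (u + u) - u := by abel
    _ = 0 := by rw [← key, sub_self]

lemma eq_zero_or_eq_or_eq_or_eq_sub (h : PermsAreAffine M) {u v : M} (hu : u ≠ 0) (hv : v ≠ 0)
    (huv : u ≠ v) (x : M) : x = 0 ∨ x = u ∨ x = v ∨ x = v - u := by
  classical
  by_contra! hx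
  obtain ⟨hx0, hxu, hxv, hxvu⟩ := hx
  have hσ0 : Equiv.swap u v 0 = 0 := Equiv.swap_apply_of_ne_of_ne (Ne.symm hu) (Ne.symm hv)
  have hσux : Equiv.swap u v (u + x) = u + x := by
    refine Equiv.swap_apply_of_ne_of_ne (by simpa using hx0) fun hux => hxvu ?_
    rw [← hux, add_sub_cancel_left]
  have key := h.map_add hσ0 u x
  rw [Equiv.swap_apply_left, Equiv.swap_apply_of_ne_of_ne hxu hxv, hσux] at key
  exact huv (add_right_cancel key)

lemma card_finset_le_four (h : PermsAreAffine M) (s : Finset M) : s.card ≤ 4 := by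
  classical
  by_contra! hs
  have hs' : 1 < (s.erase 0).card := by
    have := Finset.pred_card_le_card_erase (s := s) (a := 0)
    omega
  obtain ⟨u, hu, v, hv, huv⟩ := Finset.one_lt_card.mp hs'
  have hsub : s ⊆ {0, u, v, v - u} := fun x _ => by
    simpa using h.eq_zero_or_eq_or_eq_or_eq_sub (Finset.ne_of_mem_erase hu)
      (Finset.ne_of_mem_erase hv) huv x
  exact hs.not_ge ((Finset.card_le_card hsub).trans Finset.card_le_four)

lemma finite (h : PermsAreAffine M) : Finite M := by
  refine not_infinite_iff_finite.mp fun _ => ?_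
  obtain ⟨s, hs⟩ := Infinite.exists_subset_card_eq M 5
  have := h.card_finset_le_four s
  omega

lemma natCard_le_four (h : PermsAreAffine M) : Nat.card M ≤ 4 := by
  have := h.finite
  have := Fintype.ofFinite M
  rw [Nat.card_eq_fintype_card, ← Finset.card_univ]
  exact h.card_finset_le_four _

lemma isAddKleinFour (h : PermsAreAffine M) (hM : Nat.card M = 4) : IsAddKleinFour M := by
  have := h.finite
  have : Nontrivial M := Finite.one_lt_card_iff_nontrivial.mp (by omega)
  refine ⟨hM, (AddMonoid.exponent_eq_prime_iff Nat.prime_two).mpr fun u hu => ?_⟩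
  refine addOrderOf_eq_prime ?_ hu
  by_contra h2u
  rw [two_nsmul] at h2u
  have h4u : 4 • u = 0 := hM ▸ card_nsmul_eq_zero'
  apply hu
  calc u = 4 • u - 3 • u := by abel
    _ = 0 := by rw [h4u, h.three_nsmul_eq_zero hu h2u, sub_zero]

end PermsAreAffine

theorem stmt2_general (M : Type*) [AddCommGroup M]
    (h : ∀ π : Equiv.Perm M, ∃ (a : AddAut M) (t : M), ∀ x, π x = a x + t) :
    Subsingleton M ∨ Nonempty (M ≃+ ZMod 2) ∨ Nonempty (M ≃+ ZMod 3) ∨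
      Nonempty (M ≃+ (ZMod 2 × ZMod 2)) := by
  have h : PermsAreAffine M := h
  have := h.finite
  have hle := h.natCard_le_four
  have hpos : 0 < Nat.card M := Nat.card_pos
  interval_cases hM : Nat.card M
  · exact .inl (Finite.card_le_one_iff_subsingleton.mp hM.le)
  · exact .inr <| .inl ⟨addEquivOfPrimeCardEq hM (Nat.card_zmod 2)⟩
  · exact .inr <| .inr <| .inl ⟨addEquivOfPrimeCardEq hM (Nat.card_zmod 3)⟩
  · have := h.isAddKleinFour hM
    exact .inr <| .inr <| .inr (IsAddKleinFour.nonempty_addEquiv)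

/-- if every permutation of a finite abelian group `M` is affine-linear
(i.e. `Hol M = Sym M`), then `M` is trivial, `C2`, `C3`, or `C2 × C2`. -/
theorem stmt2 (M : Type*) [AddCommGroup M] [Fintype M]
    (h : ∀ π : Equiv.Perm M, ∃ (a : AddAut M) (t : M), ∀ x, π x = a x + t) :
    Subsingleton M ∨ Nonempty (M ≃+ ZMod 2) ∨ Nonempty (M ≃+ ZMod 3) ∨
      Nonempty (M ≃+ (ZMod 2 × ZMod 2)) :=
  stmt2_general M h
end

section
/- Let M be a finite abelian group and let M⁻ denote the set of elements of M whose order equals the exponent of M. Then M⁻ generates M. -/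
open Classical in
/-- for a finite abelian group `M`, the set `M⁻` of elements whose order
equals the exponent of `M` generates `M`. -/
theorem stmt6 (M : Type*) [AddCommGroup M] [Fintype M] :
    AddSubgroup.closure {x : M | addOrderOf x = AddMonoid.exponent M} = ⊤ := by
  set n := AddMonoid.exponent M with hn
  have hEE : AddMonoid.ExponentExists M := AddMonoid.ExponentExists.of_finite
  have hnpos : 0 < n := hEE.exponent_pos
  obtain ⟨x, hx⟩ := AddMonoid.exists_addOrderOf_eq_exponent hEE
  rw [eq_top_iff]
  intro g _
  -- choose k
  set P : Finset ℕ := n.primeFactors.filter (fun p => (n / p) • g ≠ 0) with hP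
  set k : ℕ := ∏ p ∈ P, p ^ (n.factorization p) with hk
  have hkdvd : ∀ p ∈ P, p ∣ k := by
    intro p hp
    have hp' : p.Prime := Nat.prime_of_mem_primeFactors (Finset.mem_filter.mp hp).1
    have hpe : 1 ≤ n.factorization p := by
      have := Nat.Prime.factorization_pos_of_dvd hp'
        hnpos.ne' (Nat.dvd_of_mem_primeFactors (Finset.mem_filter.mp hp).1)
      omega
    exact dvd_trans (dvd_pow_self p (Nat.one_le_iff_ne_zero.mp hpe)) (Finset.dvd_prod_of_mem _ hp)
  have hknd : ∀ p, p.Prime → p ∉ P → ¬ p ∣ k := by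
    intro p hp hpP
    have : p.Coprime k := by
      apply Nat.Coprime.prod_right
      intro q hq
      have hq' : q.Prime := Nat.prime_of_mem_primeFactors (Finset.mem_filter.mp hq).1
      apply Nat.Coprime.pow_right
      exact (Nat.coprime_primes hp hq').mpr (fun h => hpP (h ▸ hq))
    exact (Nat.Prime.coprime_iff_not_dvd hp).mp this
  -- the key element
  have hord : addOrderOf (g + k • x) = n := by
    have hdvd : addOrderOf (g + k • x) ∣ n := AddMonoid.addOrder_dvd_exponent _
    by_contra hne
    -- get a prime p with addOrderOf (g + k•x) ∣ n / p
    obtain ⟨d, hd⟩ := hdvd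
    have hd1 : d ≠ 1 := by rintro rfl; simp at hd; exact hne hd.symm
    obtain ⟨p, hp, hpd⟩ := Nat.exists_prime_and_dvd hd1
    have hpn : p ∣ n := hd ▸ Dvd.dvd.mul_left hpd _
    have hdvd' : addOrderOf (g + k • x) ∣ n / p := by
      obtain ⟨e, he⟩ := hpd
      refine ⟨e, ?_⟩
      rw [hd, he, mul_comm p e, ← mul_assoc, Nat.mul_div_cancel _ hp.pos]
    have hzero : (n / p) • (g + k • x) = 0 :=
      addOrderOf_dvd_iff_nsmul_eq_zero.mp hdvd'
    rw [smul_add, smul_smul] at hzero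
    by_cases hg0 : (n / p) • g = 0
    · -- then p ∉ P, p ∤ k, so (n/p * k) • x ≠ 0
      have hpP : p ∉ P := by
        simp only [hP, Finset.mem_filter, not_and, not_not]
        intro _; exact hg0
      have hpk := hknd p hp hpP
      have : ¬ n ∣ (n / p * k) := by
        intro hcon
        have hfac : n = p * (n / p) := (Nat.mul_div_cancel' hpn).symm
        have hnp : 0 < n / p := Nat.div_pos (Nat.le_of_dvd hnpos hpn) hp.pos
        apply hpk
        have h2 : p * (n / p) ∣ k * (n / p) := by
          rw [Nat.mul_div_cancel' hpn, mul_comm k]; exact hcon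
        exact (Nat.mul_dvd_mul_iff_right hnp).mp h2
      rw [hg0, zero_add] at hzero
      apply this
      have := addOrderOf_dvd_iff_nsmul_eq_zero.mpr hzero
      rwa [hx] at this
    · -- p ∈ P, p ∣ k, so (n/p * k) • x = 0
      have hpP : p ∈ P := by
        simp only [hP, Finset.mem_filter]
        exact ⟨Nat.mem_primeFactors.mpr ⟨hp, hpn, hnpos.ne'⟩, hg0⟩
      obtain ⟨c, hc⟩ := hkdvd p hpP
      have : (n / p * k) • x = 0 := by
        rw [← addOrderOf_dvd_iff_nsmul_eq_zero, hx, hc]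
        refine ⟨c, ?_⟩
        rw [← mul_assoc, Nat.div_mul_cancel hpn]
      rw [this, add_zero] at hzero
      exact hg0 hzero
  -- conclude
  have h1 : g + k • x ∈ AddSubgroup.closure {y : M | addOrderOf y = n} :=
    AddSubgroup.subset_closure hord
  have h2 : x ∈ AddSubgroup.closure {y : M | addOrderOf y = n} :=
    AddSubgroup.subset_closure hx
  have := AddSubgroup.sub_mem _ h1 (AddSubgroup.nsmul_mem _ h2 k)
  simpa using this
end

section
/- The natural map Aut M → Sym(M⁻), restricting an automorphism to the set M⁻ of elements of maximal order, is an injective group homomorphism. -/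
/-!
An automorphism is determined by its values on a generating set, so it suffices that the elements
of maximal order `m = exp M` generate `M`. By the structure theorem `M` is generated by elements of
prime power order. Fix `g` of order `m`, a prime `p` with `p ^ a ∥ m`, and `x` of order `p ^ c`.
If `c < a`, then `x + g` still has order `m`, since the `p`-part of `g` dominates that of `x`.
If `c = a`, then `x + p ^ a • g` has order `p ^ a * (m / p ^ a) = m`, the two orders being coprime.
Either way `x` is a difference of two elements of the closure of the elements of order `m`.
-/

open AddMonoid

namespace AddAut

variable {G : Type*} [AddGroup G]

def restrictPerm (p : G → Prop) (hp : ∀ (a : AddAut G) (x : G), p (a x) ↔ p x) :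
    Multiplicative (AddAut G) →* Equiv.Perm {x // p x} where
  toFun a := Equiv.Perm.subtypePerm a.toAdd.toEquiv (hp a.toAdd)
  map_one' := rfl
  map_mul' _ _ := rfl

theorem restrictPerm_injective {p : G → Prop} (hp : ∀ (a : AddAut G) (x : G), p (a x) ↔ p x)
    (hgen : AddSubgroup.closure {x | p x} = ⊤) : Function.Injective (restrictPerm p hp) := by
  intro a b hab
  have hab' : a.toAdd.toAddMonoidHom = b.toAdd.toAddMonoidHom :=
    AddMonoidHom.eq_of_eqOn_dense hgen fun x hx =>
      congrArg Subtype.val (Equiv.congr_fun hab ⟨x, hx⟩ :)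
  exact Multiplicative.toAdd.injective (AddEquiv.toAddMonoidHom_injective hab')

end AddAut

section FiniteAbelian

variable {M : Type*} [AddCommGroup M] [Finite M]

theorem closure_setOf_addOrderOf_eq_prime_pow :
    AddSubgroup.closure {x : M | ∃ p c : ℕ, p.Prime ∧ addOrderOf x = p ^ c} = ⊤ := by
  classical
  obtain ⟨ι, _, p, hp, e, ⟨f⟩⟩ := AddCommGroup.equiv_directSum_zmod_of_finite M
  rw [eq_top_iff]
  rintro x -
  rw [← f.symm_apply_apply x]
  induction f x using DirectSum.induction_on with
  | zero => simp only [map_zero, zero_mem]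
  | of i y =>
    have hdvd : addOrderOf (f.symm (DirectSum.of _ i y)) ∣ p i ^ e i := by
      rw [f.symm.addOrderOf_eq]
      apply addOrderOf_dvd_of_nsmul_eq_zero
      rw [← map_nsmul, nsmul_eq_mul, ZMod.natCast_self, zero_mul, map_zero]
    obtain ⟨c, -, hc⟩ := (Nat.dvd_prime_pow (hp i)).1 hdvd
    exact AddSubgroup.subset_closure ⟨p i, c, hp i, hc⟩
  | add y z hy hz =>
    rw [map_add]
    exact add_mem hy hz

theorem mem_closure_setOf_addOrderOf_eq_exponent_of_addOrderOf_eq_prime_pow {p c : ℕ}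
    (hp : p.Prime) {x : M} (hx : addOrderOf x = p ^ c) :
    x ∈ AddSubgroup.closure {y : M | addOrderOf y = exponent M} := by
  obtain ⟨g, hg⟩ := exists_addOrderOf_eq_exponent (ExponentExists.of_finite (G := M))
  set m := exponent M
  set a := m.factorization p
  have hm : m ≠ 0 := exponent_ne_zero_of_finite
  have hpa : p ^ a ∣ m := Nat.ordProj_dvd m p
  have hca : c ≤ a := (hp.pow_dvd_iff_le_factorization hm).1 (hx ▸ addOrder_dvd_exponent x)
  set H := AddSubgroup.closure {y : M | addOrderOf y = m}
  have mem_H {y : M} (hy : addOrderOf y = m) : y ∈ H := AddSubgroup.subset_closure hy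
  have hg_mem : g ∈ H := mem_H hg
  rcases hca.lt_or_eq with hlt | rfl
  · have hxg : addOrderOf (x + g) = m := by
      rw [← hg]
      refine (AddCommute.all x g).addOrderOf_add_eq_right_of_forall_prime_mul_dvd
        (isOfFinAddOrder_of_finite g) fun q hq hqx => ?_
      rw [hx] at hqx ⊢
      rw [(Nat.prime_dvd_prime_iff_eq hq hp).1 (hq.dvd_of_dvd_pow hqx), ← pow_succ', hg]
      exact (Nat.pow_dvd_pow p hlt).trans hpa
    simpa using sub_mem (mem_H hxg) hg_mem
  · have hpg : addOrderOf (p ^ a • g) = m / p ^ a := by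
      rw [addOrderOf_nsmul, hg, Nat.gcd_eq_right hpa]
    have hxpg : addOrderOf (x + p ^ a • g) = m := by
      rw [(AddCommute.all _ _).addOrderOf_add_eq_mul_addOrderOf_of_coprime
        (by rw [hx, hpg]; exact (Nat.coprime_ordCompl hp hm).pow_left a), hx, hpg,
        Nat.mul_div_cancel' hpa]
    simpa using sub_mem (mem_H hxpg) (nsmul_mem hg_mem (p ^ a))

theorem closure_setOf_addOrderOf_eq_exponent :
    AddSubgroup.closure {x : M | addOrderOf x = exponent M} = ⊤ := by
  rw [eq_top_iff, ← closure_setOf_addOrderOf_eq_prime_pow, AddSubgroup.closure_le]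
  rintro x ⟨p, c, hp, hx⟩
  exact mem_closure_setOf_addOrderOf_eq_exponent_of_addOrderOf_eq_prime_pow hp hx

end FiniteAbelian

/-- for a finite abelian group `M`, restriction of automorphisms to the set
`M⁻` of elements of maximal order is an injective group homomorphism
`Aut M → Sym (M⁻)`. -/
theorem stmt7 (M : Type*) [AddCommGroup M] [Fintype M] :
    ∃ f : Multiplicative (AddAut M) →* Equiv.Perm {x : M // addOrderOf x = AddMonoid.exponent M},
      Function.Injective f ∧
      ∀ (a : AddAut M) (x : {x : M // addOrderOf x = AddMonoid.exponent M}),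
        ((f (Multiplicative.ofAdd a) x : {x : M // addOrderOf x = AddMonoid.exponent M}) : M) = a (x : M) := by
  exact ⟨AddAut.restrictPerm (fun x => addOrderOf x = exponent M)
      (fun a x => by rw [a.addOrderOf_eq]),
    AddAut.restrictPerm_injective _ closure_setOf_addOrderOf_eq_exponent, fun _ _ => rfl⟩
end

section
/- Let H be a finite-index subgroup of a group G, X and Y be G-modules, f : X → Y an H-linear map, and f̃(x) = Σ_{gH ∈ G/H} g·f(g⁻¹·x) the associated G-linear map. Then for every n ≥ 0 and every cohomology class σ ∈ Hⁿ(G, X), one has Cor_H^G(f_* Res_H^G σ) = f̃_* σ in Hⁿ(G, Y). -/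
/-!
Both sides are computed on homogeneous cochains. Let `W = f ∘ σ̂`, where
`σ̂ (q₀, q₁, …) = q₀ • σ (q₀⁻¹ q₁, q₁⁻¹ q₂, …)` is the homogeneous cocycle of `σ`; since `f` is
`H`-linear, `W` is an `H`-equivariant cocycle. With the `H`-equivariant retraction
`φ x = x s(x⁻¹ H)` of `G` onto `H`, the cochain `Cor (f_* Res σ)` is, homogeneously,
`q ↦ Σ_c s_c • W (φ ∘ (s_c⁻¹ q))`, and `f̃_* σ` is `q ↦ Σ_c s_c • W (s_c⁻¹ q)`. The prism between
the identity and `φ` gives `W ∘ φ - W = d (P W)`, and the averaging `V ↦ Σ_c s_c • V (s_c⁻¹ ·)`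
commutes with `d` and turns `H`-equivariant cochains into `G`-equivariant ones. Hence the two
cocycles differ by the coboundary of the inhomogeneous form of `Σ_c s_c • P W (s_c⁻¹ ·)`.

Tuples are indexed by `ℕ`, and a cochain in `m` variables only reads the first `m` entries
(`DependsOn _ (Set.Iio m)`); this keeps the simplicial identities free of `Fin` casts.
-/

/-- The inhomogeneous-cochain differential in group cohomology: for an `n`-cochain
`σ : Gⁿ → X`, `(d σ)(g₀,…,gₙ) = g₀ • σ(g₁,…,gₙ) + Σⱼ (-1)^{j+1} σ(…, gⱼgⱼ₊₁, …)`
(the last summand being `(-1)^{n+1} σ(g₀,…,g_{n-1})`). -/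
def dcob {G X : Type*} [Group G] [AddCommGroup X] [DistribMulAction G X]
    (n : ℕ) (σ : (Fin n → G) → X) : (Fin (n + 1) → G) → X :=
  fun g => g 0 • σ (fun i => g i.succ) +
    ∑ j : Fin (n + 1), ((-1 : ℤ) ^ ((j : ℕ) + 1)) • σ (Fin.contractNth j (· * ·) g)

/-- The chain-level corestriction (transfer) map associated to a choice of coset
representatives `s : G/H → G`: for an `n`-cochain `τ` of `H` (recorded as a function on
tuples from `G`), `(cor τ)(g₁,…,gₙ) = Σ_{c ∈ G/H} s(c) • τ(h₁,…,hₙ)` where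
`hᵢ = s(cᵢ₋₁)⁻¹ gᵢ s(cᵢ)` and `cᵢ = (g₁⋯gᵢ)⁻¹ • c`. -/
def corMap {G : Type*} [Group G] (H : Subgroup G) [Fintype (G ⧸ H)]
    {Y : Type*} [AddCommGroup Y] [DistribMulAction G Y]
    (s : G ⧸ H → G) (n : ℕ) (τ : (Fin n → G) → Y) : (Fin n → G) → Y :=
  fun g => ∑ c : G ⧸ H,
    s c • τ (fun i =>
      (s ((((List.ofFn g).take (i : ℕ)).prod)⁻¹ • c))⁻¹ * g i *
        s ((((List.ofFn g).take ((i : ℕ) + 1)).prod)⁻¹ • c))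

/-- The averaged `G`-linear map `f̃(x) = Σ_{gH ∈ G/H} g • f(g⁻¹ • x)`. -/
def tildeMap {G : Type*} [Group G] (H : Subgroup G) [Fintype (G ⧸ H)]
    {X Y : Type*} [AddCommGroup X] [AddCommGroup Y]
    [DistribMulAction G X] [DistribMulAction G Y]
    (s : G ⧸ H → G) (f : X → Y) : X → Y :=
  fun x => ∑ c : G ⧸ H, s c • f ((s c)⁻¹ • x)

open Finset

namespace CochainTransfer

section Tuples

variable {α : Type*}

def removeNth (k : ℕ) (q : ℕ → α) : ℕ → α := fun j => if j < k then q j else q (j + 1)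

lemma removeNth_of_lt {k j : ℕ} (h : j < k) (q : ℕ → α) : removeNth k q j = q j := if_pos h

lemma removeNth_of_le {k j : ℕ} (h : k ≤ j) (q : ℕ → α) : removeNth k q j = q (j + 1) :=
  if_neg (Nat.not_lt.mpr h)

lemma removeNth_smul {M : Type*} [SMul M α] (k : ℕ) (x : M) (q : ℕ → α) :
    removeNth k (x • q) = x • removeNth k q := by
  funext j; simp only [removeNth, Pi.smul_apply]; split <;> rfl

def contractNth [Mul α] (j : ℕ) (g : ℕ → α) : ℕ → α :=
  fun i => if i < j then g i else if i = j then g j * g (j + 1) else g (i + 1)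

def partialProd [Monoid α] (g : ℕ → α) : ℕ → α
  | 0 => 1
  | j + 1 => partialProd g j * g j

lemma partialProd_succ [Monoid α] (g : ℕ → α) (j : ℕ) :
    partialProd g (j + 1) = partialProd g j * g j := rfl

lemma partialProd_congr [Monoid α] {g g' : ℕ → α} {m : ℕ} (h : ∀ j < m, g j = g' j) :
    ∀ j ≤ m, partialProd g j = partialProd g' j
  | 0, _ => rfl
  | j + 1, hj => by
    rw [partialProd_succ, partialProd_succ, partialProd_congr h j (by omega), h j hj]

lemma partialProd_extend_val [Monoid α] {m : ℕ} (g : Fin m → α) (i : Fin (m + 1)) :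
    partialProd (Function.extend Fin.val g 1) i = Fin.partialProd g i := by
  induction i using Fin.induction with
  | zero => simp [partialProd]
  | succ i ih =>
    rw [Fin.val_succ, partialProd_succ, Fin.partialProd_succ, Fin.val_injective.extend_apply,
      ← ih, Fin.val_castSucc]

lemma extend_val_apply_of_lt [One α] {m j : ℕ} (a : ℕ → α) (hj : j < m) :
    Function.extend Fin.val (fun i : Fin m => a i) 1 j = a j :=
  Fin.val_injective.extend_apply (fun i : Fin m => a i) 1 ⟨j, hj⟩

lemma restrict_extend_val [One α] {m : ℕ} (g : Fin m → α) :
    (fun i : Fin m => Function.extend Fin.val g 1 i) = g :=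
  funext fun i => Fin.val_injective.extend_apply g 1 i

def ratios [Group α] (q : ℕ → α) : ℕ → α := fun i => (q i)⁻¹ * q (i + 1)

lemma ratios_partialProd [Group α] (g : ℕ → α) : ratios (partialProd g) = g := by
  funext i; simp [ratios, partialProd]

lemma partialProd_ratios [Group α] (q : ℕ → α) (j : ℕ) :
    partialProd (ratios q) j = (q 0)⁻¹ * q j := by
  induction j with
  | zero => simp [partialProd]
  | succ j ih => simp [partialProd, ih, ratios, mul_assoc]

lemma ratios_smul [Group α] (x : α) (q : ℕ → α) : ratios (x • q) = ratios q := by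
  funext i; simp [ratios, mul_assoc]

end Tuples

section HomDiff

variable {α Z : Type*}

def inhomog [Monoid α] (W : (ℕ → α) → Z) : (ℕ → α) → Z := fun g => W (partialProd g)

lemma DependsOn.inhomog [Monoid α] {U : (ℕ → α) → Z} {m : ℕ}
    (hU : DependsOn U (Set.Iio (m + 1))) :
    DependsOn (inhomog U) (Set.Iio m) := fun _ _ hg =>
  hU fun j hj => partialProd_congr (fun j hj => hg j hj) j (Nat.lt_succ_iff.mp hj)

lemma dependsOn_restrict {m : ℕ} (σ : (Fin m → α) → Z) :
    DependsOn (fun a : ℕ → α => σ fun i => a i) (Set.Iio m) := fun _ _ h =>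
  congrArg σ (funext fun i => h i i.isLt)

variable [AddCommGroup Z]

def homDiff (m : ℕ) (W : (ℕ → α) → Z) : (ℕ → α) → Z :=
  fun q => ∑ k ∈ range (m + 2), (-1 : ℤ) ^ k • W (removeNth k q)

lemma homDiff_comp {Y : Type*} [AddCommGroup Y] (F : Z →+ Y) (m : ℕ) (W : (ℕ → α) → Z) :
    homDiff m (F ∘ W) = F ∘ homDiff m W := by
  funext q; simp [homDiff, map_sum, map_zsmul]

end HomDiff

section Cochains

variable {G : Type*} [Group G] {Z : Type*} [AddCommGroup Z] [DistribMulAction G Z]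

def homog (σ : (ℕ → G) → Z) : (ℕ → G) → Z := fun q => q 0 • σ (ratios q)

def inhomDiff (m : ℕ) (σ : (ℕ → G) → Z) : (ℕ → G) → Z :=
  fun g => g 0 • σ (fun i => g (i + 1)) +
    ∑ j ∈ range (m + 1), (-1 : ℤ) ^ (j + 1) • σ (contractNth j g)

def IsEquivariant (K : Subgroup G) (W : (ℕ → G) → Z) : Prop :=
  ∀ x ∈ K, ∀ q : ℕ → G, W (x • q) = x • W q

lemma homog_isEquivariant (σ : (ℕ → G) → Z) : IsEquivariant ⊤ (homog σ) := by
  intro x _ q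
  simp [homog, ratios_smul, mul_smul]

lemma IsEquivariant.eq_smul_inhomog_ratios {W : (ℕ → G) → Z} (hW : IsEquivariant ⊤ W)
    (q : ℕ → G) : W q = q 0 • inhomog W (ratios q) := by
  have hq : q = q 0 • partialProd (ratios q) := by
    funext j; simp [partialProd_ratios]
  conv_lhs => rw [hq]
  exact hW _ (Subgroup.mem_top _) _

lemma homog_partialProd (σ : (ℕ → G) → Z) (g : ℕ → G) :
    homog σ (partialProd g) = σ g := by
  simp [homog, ratios_partialProd, partialProd]

lemma DependsOn.homog {σ : (ℕ → G) → Z} {m : ℕ} (hσ : DependsOn σ (Set.Iio m)) :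
    DependsOn (homog σ) (Set.Iio (m + 1)) := by
  intro q q' hq
  have hratios : ∀ i ∈ Set.Iio m, ratios q i = ratios q' i := fun i hi => by
    have hi : i < m := hi
    rw [ratios, ratios, hq i (Set.mem_Iio.mpr (by omega)), hq (i + 1) (Set.mem_Iio.mpr (by omega))]
  simp only [CochainTransfer.homog, hq 0 (by simp), hσ hratios]

lemma homog_inhomog {U : (ℕ → G) → Z} (hU : IsEquivariant ⊤ U) : homog (inhomog U) = U :=
  funext fun q => (hU.eq_smul_inhomog_ratios q).symm

lemma IsEquivariant.homDiff {K : Subgroup G} {W : (ℕ → G) → Z} (hW : IsEquivariant K W)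
    (m : ℕ) : IsEquivariant K (homDiff m W) := by
  intro x hx q
  simp only [CochainTransfer.homDiff, smul_sum, removeNth_smul, hW x hx, smul_comm x]

/-- The face `removeNth 0` gives the term `g 0 • σ (g ∘ succ)`, the face `removeNth (j + 1)`
the term of `contractNth j`. -/
lemma inhomDiff_eq_inhomog_homDiff (m : ℕ) (σ : (ℕ → G) → Z) :
    inhomDiff m σ = inhomog (homDiff m (homog σ)) := by
  funext g
  simp only [inhomDiff, inhomog, homDiff, homog]
  conv_rhs => rw [sum_range_succ', add_comm, pow_zero, one_smul]
  congr 1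
  · have hratios : ratios (removeNth 0 (partialProd g)) = fun i => g (i + 1) := by
      funext i
      rw [ratios, removeNth_of_le (Nat.zero_le _), removeNth_of_le (Nat.zero_le _),
        partialProd_succ g (i + 1), inv_mul_cancel_left]
    rw [hratios, removeNth_of_le le_rfl, partialProd_succ, partialProd, one_mul]
  · refine sum_congr rfl fun j _ => ?_
    have hratios : ratios (removeNth (j + 1) (partialProd g)) = contractNth j g := by
      funext i
      simp only [ratios, contractNth]
      rcases lt_trichotomy i j with h | rfl | h
      · rw [removeNth_of_lt (by omega), removeNth_of_lt (by omega), if_pos h,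
          partialProd_succ, inv_mul_cancel_left]
      · rw [removeNth_of_lt (by omega), removeNth_of_le le_rfl, if_neg (lt_irrefl i),
          if_pos rfl, partialProd_succ g (i + 1), partialProd_succ g i, mul_assoc,
          inv_mul_cancel_left]
      · rw [removeNth_of_le (by omega), removeNth_of_le (by omega), if_neg (by omega),
          if_neg (by omega), partialProd_succ g (i + 1), inv_mul_cancel_left]
    rw [hratios, removeNth_of_lt (Nat.succ_pos j), partialProd, one_smul]

lemma homDiff_homog_eq_zero {m : ℕ} {σ : (ℕ → G) → Z} (hσ : inhomDiff m σ = 0) :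
    homDiff m (homog σ) = 0 := by
  funext q
  rw [((homog_isEquivariant σ).homDiff m).eq_smul_inhomog_ratios, ← inhomDiff_eq_inhomog_homDiff,
    hσ, Pi.zero_apply, smul_zero, Pi.zero_apply]

lemma dcob_eq_inhomDiff {m : ℕ} (σ : (Fin m → G) → Z) {σN : (ℕ → G) → Z}
    (hσ : ∀ a : ℕ → G, σN a = σ fun i => a i) (g : ℕ → G) :
    dcob m σ (fun i => g i) = inhomDiff m σN g := by
  simp only [dcob, inhomDiff, hσ]
  congr 1
  rw [← Fin.sum_univ_eq_sum_range
    (fun j => (-1 : ℤ) ^ (j + 1) • σ fun i => contractNth j g i)]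
  refine sum_congr rfl fun j _ => ?_
  congr 2
  funext i
  simp only [contractNth, Fin.contractNth]
  rcases lt_trichotomy (i : ℕ) j with h | h | h
  · simp [h]
  · simp [h]
  · simp [show ¬ (i : ℕ) < j by omega, show (i : ℕ) ≠ j by omega]

end Cochains

section Prism

variable {G : Type*} [Group G] (H : Subgroup G) (s : G ⧸ H → G)

def retract (x : G) : G := x * s (x⁻¹ : G)

variable {H s}

lemma retract_mem (hs : ∀ c, (s c : G ⧸ H) = c) (x : G) : retract H s x ∈ H := by
  have h : (s (x⁻¹ : G) : G ⧸ H) = (x⁻¹ : G) := hs _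
  simpa [retract, mul_inv_rev] using H.inv_mem (QuotientGroup.eq.mp h)

lemma retract_mul {h : G} (hh : h ∈ H) (x : G) : retract H s (h * x) = h * retract H s x := by
  have hq : (((h * x)⁻¹ : G) : G ⧸ H) = (x⁻¹ : G) := by
    rw [QuotientGroup.eq]
    simpa [mul_inv_rev, mul_assoc] using hh
  simp only [retract, hq, mul_assoc]

variable (H s)

/-- The `i`-th vertex tuple of the prism between `q` and `retract ∘ q`:
`(φ q₀, …, φ qᵢ, qᵢ, qᵢ₊₁, …)` with `φ = retract H s`. -/
def prismTuple (i : ℕ) (q : ℕ → G) : ℕ → G :=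
  fun j => if j ≤ i then retract H s (q j) else q (j - 1)

lemma removeNth_prismTuple_of_lt {k i : ℕ} (hk : k < i) (q : ℕ → G) :
    removeNth k (prismTuple H s i q) = prismTuple H s (i - 1) (removeNth k q) := by
  funext j
  simp only [removeNth, prismTuple]
  split_ifs <;> first | rfl | omega | (congr 1; omega)

lemma removeNth_prismTuple_of_add_two_le {k i : ℕ} (hk : i + 2 ≤ k) (q : ℕ → G) :
    removeNth k (prismTuple H s i q) = prismTuple H s i (removeNth (k - 1) q) := by
  funext j
  simp only [removeNth, prismTuple]
  split_ifs <;> first | rfl | omega | (congr 1; omega)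

lemma removeNth_succ_prismTuple (i : ℕ) (q : ℕ → G) :
    removeNth (i + 1) (prismTuple H s i q) = removeNth (i + 1) (prismTuple H s (i + 1) q) := by
  funext j
  simp only [removeNth, prismTuple]
  split_ifs <;> first | rfl | omega

lemma removeNth_zero_prismTuple_zero (q : ℕ → G) : removeNth 0 (prismTuple H s 0 q) = q := by
  funext j
  simp only [removeNth, prismTuple]
  split_ifs <;> first | rfl | omega

lemma removeNth_prismTuple_self_of_lt {i j : ℕ} (hj : j < i) (q : ℕ → G) :
    removeNth i (prismTuple H s i q) j = retract H s (q j) := by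
  simp only [removeNth, prismTuple]
  split_ifs <;> first | rfl | omega

end Prism

section Homotopy

/-- The two triangles are the faces `k ≤ i` and `k > i` of `homDiff n (prism H s n W)`, indexed as
they come out of `neg_one_pow_smul_homDiff_prismTuple`. -/
lemma sum_alternating_rect_eq_triangles {Z : Type*} [AddCommGroup Z] (A : ℕ → ℕ → Z)
    (n : ℕ) :
    ∑ k ∈ range (n + 2), (-1 : ℤ) ^ k • ∑ i ∈ range (n + 1), (-1 : ℤ) ^ (i + 1) • A i k =
      ∑ i ∈ range (n + 2), (-1 : ℤ) ^ i • ∑ k ∈ range i, (-1 : ℤ) ^ k • A (i - 1) k +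
      ∑ i ∈ range (n + 2),
        (-1 : ℤ) ^ i • ∑ k ∈ Ico (i + 2) (n + 3), (-1 : ℤ) ^ k • A i (k - 1) := by
  have hlower :
      ∑ i ∈ range (n + 2), (-1 : ℤ) ^ i • ∑ k ∈ range i, (-1 : ℤ) ^ k • A (i - 1) k =
        ∑ i ∈ range (n + 1), (-1 : ℤ) ^ (i + 1) • ∑ k ∈ range (i + 1), (-1 : ℤ) ^ k • A i k := by
    rw [sum_range_succ']
    simp
  have hupper : ∑ i ∈ range (n + 2),
      (-1 : ℤ) ^ i • ∑ k ∈ Ico (i + 2) (n + 3), (-1 : ℤ) ^ k • A i (k - 1) =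
      ∑ i ∈ range (n + 1),
        (-1 : ℤ) ^ (i + 1) • ∑ k ∈ Ico (i + 1) (n + 2), (-1 : ℤ) ^ k • A i k := by
    rw [sum_range_succ, Ico_self, sum_empty, smul_zero, add_zero]
    refine sum_congr rfl fun i _ => ?_
    rw [← sum_Ico_add' (fun k => (-1 : ℤ) ^ k • A i (k - 1)) (i + 1) (n + 2) 1, smul_sum,
      smul_sum]
    refine sum_congr rfl fun k _ => ?_
    rw [smul_smul, smul_smul, Nat.add_sub_cancel]
    congr 1
    ring
  have hrow : ∀ i ∈ range (n + 1),
      (-1 : ℤ) ^ (i + 1) • ∑ k ∈ range (i + 1), (-1 : ℤ) ^ k • A i k +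
        (-1 : ℤ) ^ (i + 1) • ∑ k ∈ Ico (i + 1) (n + 2), (-1 : ℤ) ^ k • A i k =
      (-1 : ℤ) ^ (i + 1) • ∑ k ∈ range (n + 2), (-1 : ℤ) ^ k • A i k := fun i hi => by
    rw [← smul_add, sum_range_add_sum_Ico _ (by rw [mem_range] at hi; omega)]
  rw [hlower, hupper, ← sum_add_distrib, sum_congr rfl hrow]
  simp only [smul_sum, smul_smul]
  rw [sum_comm]
  exact sum_congr rfl fun k _ => sum_congr rfl fun i _ => by rw [mul_comm]

variable {G : Type*} [Group G] (H : Subgroup G) (s : G ⧸ H → G) {Z : Type*} [AddCommGroup Z]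

def prism (n : ℕ) (W : (ℕ → G) → Z) : (ℕ → G) → Z :=
  fun q => ∑ i ∈ range (n + 1), (-1 : ℤ) ^ (i + 1) • W (prismTuple H s i q)

variable {H s} in
lemma DependsOn.prism {W : (ℕ → G) → Z} {n : ℕ} (hW : DependsOn W (Set.Iio (n + 2))) :
    DependsOn (prism H s n W) (Set.Iio (n + 1)) := by
  intro q q' hq
  refine sum_congr rfl fun i hi => congrArg _ (hW fun j hj => ?_)
  rw [mem_range] at hi
  rw [Set.mem_Iio] at hj
  simp only [prismTuple]
  split_ifs
  · rw [hq j (by rw [Set.mem_Iio]; omega)]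
  · rw [hq (j - 1) (by rw [Set.mem_Iio]; omega)]

/-- The faces `k < i` and `k > i + 1` of the `i`-th prism simplex are prism simplices of faces
of `q`; the two middle ones telescope when summed over `i`. -/
lemma neg_one_pow_smul_homDiff_prismTuple (W : (ℕ → G) → Z) (n : ℕ) {i : ℕ}
    (hi : i < n + 2) (q : ℕ → G) :
    (-1 : ℤ) ^ i • homDiff (n + 1) W (prismTuple H s i q) =
      (-1 : ℤ) ^ i •
        ∑ k ∈ range i, (-1 : ℤ) ^ k • W (prismTuple H s (i - 1) (removeNth k q)) +
      (W (removeNth i (prismTuple H s i q)) -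
        W (removeNth (i + 1) (prismTuple H s (i + 1) q))) +
      (-1 : ℤ) ^ i • ∑ k ∈ Ico (i + 2) (n + 3),
        (-1 : ℤ) ^ k • W (prismTuple H s i (removeNth (k - 1) q)) := by
  have hlower : ∑ k ∈ range i, (-1 : ℤ) ^ k • W (removeNth k (prismTuple H s i q)) =
      ∑ k ∈ range i, (-1 : ℤ) ^ k • W (prismTuple H s (i - 1) (removeNth k q)) :=
    sum_congr rfl fun k hk => by rw [removeNth_prismTuple_of_lt H s (mem_range.mp hk)]
  have hupper :
      ∑ k ∈ Ico (i + 2) (n + 3), (-1 : ℤ) ^ k • W (removeNth k (prismTuple H s i q)) =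
        ∑ k ∈ Ico (i + 2) (n + 3), (-1 : ℤ) ^ k • W (prismTuple H s i (removeNth (k - 1) q)) :=
    sum_congr rfl fun k hk => by rw [removeNth_prismTuple_of_add_two_le H s (mem_Ico.mp hk).1]
  have hsign : ∀ x : Z, (-1 : ℤ) ^ i • (-1 : ℤ) ^ i • x = x := fun x => by
    rw [smul_smul, ← mul_pow]; simp
  have hsign' : ∀ x : Z, (-1 : ℤ) ^ i • (-1 : ℤ) ^ (i + 1) • x = -x := fun x => by
    rw [pow_succ, smul_smul, ← mul_assoc, ← mul_pow]; simp
  rw [homDiff, ← sum_range_add_sum_Ico _ (show i + 2 ≤ n + 1 + 2 by omega), sum_range_succ,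
    sum_range_succ, removeNth_succ_prismTuple, hlower, hupper, smul_add, smul_add, smul_add,
    hsign, hsign']
  abel

theorem sub_eq_homDiff_prism {W : (ℕ → G) → Z} {n : ℕ} (hW : homDiff (n + 1) W = 0)
    (hloc : DependsOn W (Set.Iio (n + 2))) (q : ℕ → G) :
    W (retract H s ∘ q) - W q = homDiff n (prism H s n W) q := by
  have hD0 : W (removeNth 0 (prismTuple H s 0 q)) = W q := by
    rw [removeNth_zero_prismTuple_zero]
  have hDtop : W (removeNth (n + 2) (prismTuple H s (n + 2) q)) = W (retract H s ∘ q) :=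
    hloc fun j hj => removeNth_prismTuple_self_of_lt H s hj q
  have hfaces :
      ∑ i ∈ range (n + 2), (-1 : ℤ) ^ i • homDiff (n + 1) W (prismTuple H s i q) = 0 := by
    simp [hW]
  rw [sum_congr rfl fun i hi =>
      neg_one_pow_smul_homDiff_prismTuple H s W n (mem_range.mp hi) q,
    sum_add_distrib, sum_add_distrib,
    sum_range_sub' (fun i => W (removeNth i (prismTuple H s i q))), hD0, hDtop] at hfaces
  simp only [homDiff, prism]
  rw [sum_alternating_rect_eq_triangles (fun i k => W (prismTuple H s i (removeNth k q)))]
  linear_combination (norm := abel) -hfaces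

end Homotopy

section Transfer

variable {G : Type*} [Group G] (H : Subgroup G) (s : G ⧸ H → G)
  {Z : Type*} [AddCommGroup Z] [DistribMulAction G Z]

lemma prismTuple_smul {x : G} (hx : x ∈ H) (i : ℕ) (q : ℕ → G) :
    prismTuple H s i (x • q) = x • prismTuple H s i q := by
  funext j
  simp only [prismTuple, Pi.smul_apply, smul_eq_mul]
  split_ifs
  · exact retract_mul hx _
  · rfl

variable {H s}

lemma IsEquivariant.prism {W : (ℕ → G) → Z} (hW : IsEquivariant H W) (n : ℕ) :
    IsEquivariant H (prism H s n W) := by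
  intro x hx q
  simp only [CochainTransfer.prism, smul_sum, prismTuple_smul H s hx, hW x hx, smul_comm x]

variable [Fintype (G ⧸ H)]

variable (H s) in
def cor (W : (ℕ → G) → Z) : (ℕ → G) → Z :=
  fun q => ∑ c : G ⧸ H, s c • W ((s c)⁻¹ • q)

lemma homDiff_cor (m : ℕ) (W : (ℕ → G) → Z) :
    homDiff m (cor H s W) = cor H s (homDiff m W) := by
  funext q
  simp only [homDiff, cor, smul_sum, removeNth_smul, smul_comm (s _)]
  exact sum_comm

lemma DependsOn.cor {W : (ℕ → G) → Z} {S : Set ℕ} (hW : DependsOn W S) :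
    DependsOn (cor H s W) S := fun q q' hq =>
  sum_congr rfl fun c _ => congrArg _ (hW fun j hj => by rw [Pi.smul_apply, Pi.smul_apply, hq j hj])

/-- Left multiplication by `x` permutes the cosets, and `s (x • c)⁻¹ * x * s c ∈ H`
is absorbed by the `H`-equivariance of `W`. -/
lemma IsEquivariant.cor (hs : ∀ c, (s c : G ⧸ H) = c) {W : (ℕ → G) → Z}
    (hW : IsEquivariant H W) : IsEquivariant ⊤ (cor H s W) := by
  intro x _ q
  simp only [CochainTransfer.cor, smul_sum]
  refine (Fintype.sum_equiv (MulAction.toPerm x) _ _ fun c => ?_).symm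
  have hmem : (s (x • c))⁻¹ * (x * s c) ∈ H := by
    apply QuotientGroup.eq.mp
    rw [hs (x • c)]
    conv_lhs => rw [← hs c]
    rfl
  have harg :
      (s (x • c))⁻¹ • x • q = ((s (x • c))⁻¹ * (x * s c)) • (s c)⁻¹ • q := by
    simp only [smul_smul]; group
  rw [MulAction.toPerm_apply, harg, hW _ hmem, smul_smul, smul_smul]
  congr 1
  group

end Transfer

section Bridge

variable {G : Type*} [Group G] {H : Subgroup G} {s : G ⧸ H → G}
  {Z : Type*} [AddCommGroup Z] [DistribMulAction G Z]

lemma retract_inv_smul (hs : ∀ c, (s c : G ⧸ H) = c) (c : G ⧸ H) (x : G) :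
    retract H s ((s c)⁻¹ * x) = (s c)⁻¹ * x * s (x⁻¹ • c) := by
  have hcoset : ((x⁻¹ * s c : G) : G ⧸ H) = x⁻¹ • c := by
    conv_rhs => rw [← hs c]
    rfl
  rw [retract, mul_inv_rev, inv_inv, hcoset]

lemma ratios_retract_inv_smul_partialProd (hs : ∀ c, (s c : G ⧸ H) = c) (c : G ⧸ H)
    (g : ℕ → G) (i : ℕ) :
    ratios (retract H s ∘ ((s c)⁻¹ • partialProd g)) i =
      (s ((partialProd g i)⁻¹ • c))⁻¹ * g i * s ((partialProd g (i + 1))⁻¹ • c) := by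
  simp only [ratios, Function.comp_apply, Pi.smul_apply, smul_eq_mul, retract_inv_smul hs,
    partialProd_succ]
  group

lemma corMap_eq_cor [Fintype (G ⧸ H)] (hs : ∀ c, (s c : G ⧸ H) = c) {m : ℕ}
    (τ : (Fin m → G) → Z) (g : Fin m → G) :
    corMap H s m τ g = cor H s (fun q => homog (fun a => τ fun i => a i) (retract H s ∘ q))
      (partialProd (Function.extend Fin.val g 1)) := by
  refine sum_congr rfl fun c _ => ?_
  have hzero :
      (retract H s ∘ ((s c)⁻¹ • partialProd (Function.extend Fin.val g 1))) 0 = 1 := by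
    show retract H s ((s c)⁻¹ * 1) = 1
    rw [retract_inv_smul hs, inv_one, one_smul, mul_one, inv_mul_cancel]
  dsimp only
  rw [homog, hzero, one_smul]
  congr 2
  funext i
  have hcast : partialProd (Function.extend Fin.val g 1) i = ((List.ofFn g).take i).prod :=
    partialProd_extend_val g i.castSucc
  have hsucc : partialProd (Function.extend Fin.val g 1) (i + 1) =
      ((List.ofFn g).take (i + 1)).prod :=
    partialProd_extend_val g i.succ
  rw [ratios_retract_inv_smul_partialProd hs, hcast, hsucc, Fin.val_injective.extend_apply]

lemma tildeMap_eq_cor [Fintype (G ⧸ H)] {X : Type*} [AddCommGroup X] [DistribMulAction G X]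
    (f : X → Z) {m : ℕ} (σ : (Fin m → G) → X) (g : Fin m → G) :
    tildeMap H s f (σ g) = cor H s (fun q => f (homog (fun a => σ fun i => a i) q))
      (partialProd (Function.extend Fin.val g 1)) := by
  refine sum_congr rfl fun c _ => ?_
  dsimp only
  rw [homog_isEquivariant _ _ (Subgroup.mem_top _), homog_partialProd]
  rw [restrict_extend_val]

end Bridge

variable {G : Type*} [Group G] {H : Subgroup G} [Fintype (G ⧸ H)] {s : G ⧸ H → G}
  {X Y : Type*} [AddCommGroup X] [AddCommGroup Y] [DistribMulAction G X] [DistribMulAction G Y]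

lemma smul_eq_of_dcob_zero_eq_zero {σ : (Fin 0 → G) → X} (hσ : dcob 0 σ = 0) (x : G)
    (e : Fin 0 → G) : x • σ e = σ e := by
  have h := congrFun hσ fun _ => x
  simpa [dcob, Subsingleton.elim _ e, add_neg_eq_zero] using h

lemma corMap_zero_eq_tildeMap (f : X → Y) {σ : (Fin 0 → G) → X} (hσ : dcob 0 σ = 0) :
    corMap H s 0 (fun g => f (σ g)) = fun g => tildeMap H s f (σ g) := by
  funext g
  refine sum_congr rfl fun c _ => ?_
  rw [smul_eq_of_dcob_zero_eq_zero hσ]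
  congr 3
  exact Subsingleton.elim _ _

theorem exists_corMap_sub_tildeMap_eq_dcob (hs : ∀ c, (s c : G ⧸ H) = c) (F : X →+ Y)
    (hF : ∀ h ∈ H, ∀ x, F (h • x) = h • F x) {n : ℕ} {σ : (Fin (n + 1) → G) → X}
    (hσ : dcob (n + 1) σ = 0) :
    ∃ τ : (Fin n → G) → Y,
      (corMap H s (n + 1) (fun g => F (σ g)) - fun g => tildeMap H s F (σ g)) = dcob n τ := by
  set σN : (ℕ → G) → X := fun a => σ fun i => a i
  set W : (ℕ → G) → Y := F ∘ homog σN
  have hWloc : DependsOn W (Set.Iio (n + 2)) := fun _ _ h =>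
    congrArg F (DependsOn.homog (dependsOn_restrict σ) h)
  have hWcocycle : homDiff (n + 1) W = 0 := by
    have hσN : inhomDiff (n + 1) σN = 0 := funext fun g => by
      rw [← dcob_eq_inhomDiff σ fun _ => rfl, hσ, Pi.zero_apply, Pi.zero_apply]
    rw [homDiff_comp, homDiff_homog_eq_zero hσN]
    exact funext fun _ => F.map_zero
  have hWequiv : IsEquivariant H W := fun x hx q => by
    simp only [W, Function.comp_apply, homog_isEquivariant σN x (Subgroup.mem_top x), hF x hx]
  set U := cor H s (prism H s n W)
  have hUloc : DependsOn (inhomog U) (Set.Iio n) :=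
    DependsOn.inhomog (DependsOn.cor (DependsOn.prism hWloc))
  refine ⟨fun b => inhomog U (Function.extend Fin.val b 1), ?_⟩
  funext g
  set P := partialProd (Function.extend Fin.val g 1)
  calc corMap H s (n + 1) (fun g => F (σ g)) g - tildeMap H s F (σ g)
      = cor H s (fun q => W (retract H s ∘ q)) P - cor H s W P := by
        rw [corMap_eq_cor hs, tildeMap_eq_cor]
        congr 2
        funext q
        exact (hF _ (retract_mem hs (q 0)) _).symm
    _ = cor H s (homDiff n (prism H s n W)) P := by
        simp only [cor, ← sum_sub_distrib, ← smul_sub, sub_eq_homDiff_prism H s hWcocycle hWloc]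
    _ = inhomDiff n (inhomog U) (Function.extend Fin.val g 1) := by
        rw [inhomDiff_eq_inhomog_homDiff, homog_inhomog ((hWequiv.prism n).cor hs), homDiff_cor]
        rfl
    _ = dcob n (fun b => inhomog U (Function.extend Fin.val b 1)) g := by
        rw [← dcob_eq_inhomDiff (fun b => inhomog U (Function.extend Fin.val b 1))
          fun a => hUloc fun j hj => (extend_val_apply_of_lt a hj).symm, restrict_extend_val]

end CochainTransfer

/-- for `H ≤ G` of finite index, `G`-modules `X, Y`, and an `H`-linear map
`f : X → Y`, one has `Cor_H^G (f_* Res_H^G σ) = f̃_* σ` in `Hⁿ(G, Y)` for every `n ≥ 0`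
and every class `σ ∈ Hⁿ(G, X)`: in degree `0` the cocycle-level maps agree on the nose,
and in positive degree `n + 1` they differ by the coboundary of an `n`-cochain. -/
theorem stmt13 (G : Type*) [Group G] (H : Subgroup G) [Fintype (G ⧸ H)]
    (X Y : Type*) [AddCommGroup X] [AddCommGroup Y]
    [DistribMulAction G X] [DistribMulAction G Y]
    (f : X → Y) (hadd : ∀ x y : X, f (x + y) = f x + f y)
    (hH : ∀ h ∈ H, ∀ x : X, f (h • x) = h • f x)
    (s : G ⧸ H → G) (hs : ∀ c : G ⧸ H, (s c : G ⧸ H) = c) :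
    (∀ σ : (Fin 0 → G) → X, dcob 0 σ = 0 →
      corMap H s 0 (fun g => f (σ g)) = fun g => tildeMap H s f (σ g)) ∧
    (∀ (n : ℕ) (σ : (Fin (n + 1) → G) → X), dcob (n + 1) σ = 0 →
      ∃ τ : (Fin n → G) → Y,
        (corMap H s (n + 1) (fun g => f (σ g)) - fun g => tildeMap H s f (σ g)) =
          dcob n τ) :=
  ⟨fun _ hσ => CochainTransfer.corMap_zero_eq_tildeMap f hσ, fun _ _ hσ =>
    CochainTransfer.exists_corMap_sub_tildeMap_eq_dcob hs (AddMonoidHom.mk' f hadd) hH hσ⟩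
end

section
/- Let K be a field of characteristic ≠ 2, 3, and T' a quadratic étale K-algebra with norm N and conjugation ξ ↦ ξ̄. Fix δ ∈ T' with N(δ) = 1 and a cube root δ^{1/3} of norm 1 in the separable closure. Then the multiplication rule κ(a, ξ)·κ(b, η) = κ(ab + tr_{T'/K}(ξ η̄), aη + bξ + ξ̄η̄/δ) holds for the map κ(a,ξ) = (a + tr(ξ ω δ^{1/3}))_ω, ω ranging over norm-1 cube roots of unity; consequently the image of κ is closed under multiplication and is a cubic K-algebra. -/
section

variable {F : Type*} [Field F]

/-- The conjugation (swap) on the split quadratic algebra `F × F`. -/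
def swapConj (x : F × F) : F × F := (x.2, x.1)

/-- The trace of the split quadratic algebra `F × F` down to `F`. -/
def trQuad (x : F × F) : F := x.1 + x.2

/-- The three norm-one cube roots of unity `(1;1), (ζ;ζ²), (ζ²;ζ)` in `F × F`. -/
def cubeOmegas (ζ : F) : Fin 3 → F × F := ![(1, 1), (ζ, ζ ^ 2), (ζ ^ 2, ζ)]

/-- The Cardano map `κ(a, ξ) = (a + tr(ξ ω δ^{1/3}))_ω`, with coordinates indexed by the
norm-one cube roots of unity `ω`, where `d = δ^{1/3}` is a fixed norm-one cube root. -/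
def kappaCubic (ζ : F) (d : F × F) (a : F) (ξ : F × F) : Fin 3 → F :=
  fun i => a + trQuad (ξ * cubeOmegas ζ i * d)

end

/-- in characteristic `≠ 2, 3`, with `δ` of norm `1` and `d = δ^{1/3}` a
norm-one cube root, the multiplication rule
`κ(a,ξ)·κ(b,η) = κ(ab + tr(ξ η̄), aη + bξ + ξ̄η̄/δ)` holds, where the quadratic algebra is
modelled by `F × F` with the swap as conjugation; consequently the image of `κ`
(a three-dimensional, i.e. cubic, `K`-subspace) is closed under multiplication. -/
theorem stmt14 (F : Type*) [Field F] (h2 : (2 : F) ≠ 0) (h3 : (3 : F) ≠ 0)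
    (ζ : F) (hζ : IsPrimitiveRoot ζ 3)
    (δ d : F × F) (hδ : δ.1 * δ.2 = 1) (hd3 : d ^ 3 = δ) (hdN : d.1 * d.2 = 1) :
    (∀ (a b : F) (ξ η : F × F),
      (fun i => kappaCubic ζ d a ξ i * kappaCubic ζ d b η i) =
        kappaCubic ζ d (a * b + trQuad (ξ * swapConj η))
          (((a, a) : F × F) * η + ((b, b) : F × F) * ξ + swapConj ξ * swapConj η * δ⁻¹)) ∧
    (∀ p q : Fin 3 → F,
      p ∈ Set.range (fun z : F × (F × F) => kappaCubic ζ d z.1 z.2) →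
      q ∈ Set.range (fun z : F × (F × F) => kappaCubic ζ d z.1 z.2) →
      (fun i => p i * q i) ∈ Set.range (fun z : F × (F × F) => kappaCubic ζ d z.1 z.2)) := by

  have hζ3 : ζ ^ 3 = 1 := hζ.pow_eq_one
  have hδ1 : δ.1⁻¹ = δ.2 := (eq_inv_of_mul_eq_one_right hδ).symm
  have hδ2 : δ.2⁻¹ = δ.1 := (eq_inv_of_mul_eq_one_left hδ).symm
  have hd1 : d.1 ^ 3 = δ.1 := by rw [← hd3]; rfl
  have hd2 : d.2 ^ 3 = δ.2 := by rw [← hd3]; rfl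
  have key : ∀ (a b : F) (ξ η : F × F),
      (fun i => kappaCubic ζ d a ξ i * kappaCubic ζ d b η i) =
        kappaCubic ζ d (a * b + trQuad (ξ * swapConj η))
          (((a, a) : F × F) * η + ((b, b) : F × F) * ξ + swapConj ξ * swapConj η * δ⁻¹) := by
    intro a b ξ η
    funext i
    fin_cases i <;>
      simp [kappaCubic, cubeOmegas, trQuad, swapConj, Prod.fst_mul, Prod.snd_mul,
        Prod.fst_add, Prod.snd_add, Prod.fst_inv, Prod.snd_inv] <;>
      rw [hδ1, hδ2, ← hd1, ← hd2]
    · linear_combination (ξ.1 * η.2 + ξ.2 * η.1 - ξ.2 * η.2 * d.2 ^ 2 - ξ.1 * η.1 * d.1 ^ 2) * hdN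
    · linear_combination
        (-(ξ.1 * η.1) * ζ ^ 2 * d.1 ^ 2 + (ξ.1 * η.2 + ξ.2 * η.1) * ζ ^ 3
          - ξ.2 * η.2 * ζ * d.2 ^ 2) * hdN +
        ((ξ.1 * η.2 + ξ.2 * η.1) + ξ.2 * η.2 * ζ * d.2 ^ 2) * hζ3
    · linear_combination
        (-(ξ.1 * η.1) * ζ * d.1 ^ 2 + (ξ.1 * η.2 + ξ.2 * η.1) * ζ ^ 3
          - ξ.2 * η.2 * ζ ^ 2 * d.2 ^ 2) * hdN +
        ((ξ.1 * η.2 + ξ.2 * η.1) + ξ.1 * η.1 * ζ * d.1 ^ 2) * hζ3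
  refine ⟨key, ?_⟩
  rintro p q ⟨⟨a, ξ⟩, rfl⟩ ⟨⟨b, η⟩, rfl⟩
  exact ⟨⟨a * b + trQuad (ξ * swapConj η),
    ((a, a) : F × F) * η + ((b, b) : F × F) * ξ + swapConj ξ * swapConj η * δ⁻¹⟩,
    (key a b ξ η).symm⟩
end

section
/- Let K be a field of characteristic ≠ 2, 3, T' a quadratic étale K-algebra, δ ∈ T' with N(δ)=1, and L the image of the map κ from the classical cubic construction. Then the discriminant of the element κ(a, ξ) over K equals −27(ξ³δ − ξ̄³δ̄)², and hence the quadratic resolvent of L is K[√(−3·disc(T'/K))]. -/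
/-- the discriminant of the element `κ(a, ξ)` — the product of the squared
differences of its three coordinates (conjugates) — equals `−27 (ξ³δ − ξ̄³δ̄)²`; in
particular it is `−3` times a square, so the quadratic resolvent of the cubic algebra is
`K[√(−3·disc(T'/K))]`. -/
theorem stmt15 (F : Type*) [Field F] (h2 : (2 : F) ≠ 0) (h3 : (3 : F) ≠ 0)
    (ζ : F) (hζ : IsPrimitiveRoot ζ 3)
    (δ d : F × F) (hδ : δ.1 * δ.2 = 1) (hd3 : d ^ 3 = δ) (hdN : d.1 * d.2 = 1)
    (a : F) (ξ : F × F) :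
    ((kappaCubic ζ d a ξ 0 - kappaCubic ζ d a ξ 1) ^ 2 *
      (kappaCubic ζ d a ξ 0 - kappaCubic ζ d a ξ 2) ^ 2 *
      (kappaCubic ζ d a ξ 1 - kappaCubic ζ d a ξ 2) ^ 2 =
      -27 * ((ξ ^ 3 * δ - swapConj (ξ ^ 3 * δ)).1) ^ 2) ∧
    (∃ z : F,
      (kappaCubic ζ d a ξ 0 - kappaCubic ζ d a ξ 1) ^ 2 *
        (kappaCubic ζ d a ξ 0 - kappaCubic ζ d a ξ 2) ^ 2 *
        (kappaCubic ζ d a ξ 1 - kappaCubic ζ d a ξ 2) ^ 2 = -3 * z ^ 2) := by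

  subst hd3
  have hζ3 : ζ ^ 3 = 1 := hζ.pow_eq_one
  have hζ1 : ζ ≠ 1 := hζ.ne_one (by norm_num)
  have hrel : ζ ^ 2 + ζ + 1 = 0 := by
    have : (ζ - 1) * (ζ ^ 2 + ζ + 1) = 0 := by linear_combination hζ3
    rcases mul_eq_zero.mp this with h | h
    · exact absurd (sub_eq_zero.mp h) hζ1
    · exact h
  simp only [kappaCubic, cubeOmegas, trQuad, swapConj, Matrix.cons_val_zero,
    Matrix.cons_val_one, Matrix.head_cons, Matrix.cons_val_two, Matrix.tail_cons,
    Prod.mk_mul_mk, Prod.fst_mul, Prod.snd_mul, Prod.fst_sub, Prod.snd_sub,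
    Prod.pow_fst, Prod.pow_snd]
  set x : F := ξ.1 * d.1 with hx
  set y : F := ξ.2 * d.2 with hy
  have key : (a + (ξ.1 * 1 * d.1 + ξ.2 * 1 * d.2) - (a + (ξ.1 * ζ * d.1 + ξ.2 * ζ ^ 2 * d.2))) ^ 2 *
      (a + (ξ.1 * 1 * d.1 + ξ.2 * 1 * d.2) - (a + (ξ.1 * ζ ^ 2 * d.1 + ξ.2 * ζ * d.2))) ^ 2 *
      (a + (ξ.1 * ζ * d.1 + ξ.2 * ζ ^ 2 * d.2) - (a + (ξ.1 * ζ ^ 2 * d.1 + ξ.2 * ζ * d.2))) ^ 2 =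
      -27 * (ξ.1 ^ 3 * d.1 ^ 3 - ξ.2 ^ 3 * d.2 ^ 3) ^ 2 := by
    have hxx : ξ.1 ^ 3 * d.1 ^ 3 = x ^ 3 := by rw [hx]; ring
    have hyy : ξ.2 ^ 3 * d.2 ^ 3 = y ^ 3 := by rw [hy]; ring
    rw [hxx, hyy]
    linear_combination ((27:F) * y^6 +
      (-54:F) * x^3 * y^3 +
      (27:F) * x^6 +
      (-27:F) * ζ^1 * y^6 +
      (54:F) * ζ^1 * x^3 * y^3 +
      (-27:F) * ζ^1 * x^6 +
      (1:F) * ζ^2 * y^6 +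
      (2:F) * ζ^2 * x^1 * y^5 +
      (-1:F) * ζ^2 * x^2 * y^4 +
      (-4:F) * ζ^2 * x^3 * y^3 +
      (-1:F) * ζ^2 * x^4 * y^2 +
      (2:F) * ζ^2 * x^5 * y^1 +
      (1:F) * ζ^2 * x^6 +
      (22:F) * ζ^3 * y^6 +
      (-10:F) * ζ^3 * x^1 * y^5 +
      (5:F) * ζ^3 * x^2 * y^4 +
      (-34:F) * ζ^3 * x^3 * y^3 +
      (5:F) * ζ^3 * x^4 * y^2 +
      (-10:F) * ζ^3 * x^5 * y^1 +
      (22:F) * ζ^3 * x^6 +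
      (-19:F) * ζ^4 * y^6 +
      (18:F) * ζ^4 * x^1 * y^5 +
      (-8:F) * ζ^4 * x^2 * y^4 +
      (18:F) * ζ^4 * x^3 * y^3 +
      (-8:F) * ζ^4 * x^4 * y^2 +
      (18:F) * ζ^4 * x^5 * y^1 +
      (-19:F) * ζ^4 * x^6 +
      (1:F) * ζ^5 * y^6 +
      (-10:F) * ζ^5 * x^1 * y^5 +
      (-1:F) * ζ^5 * x^2 * y^4 +
      (20:F) * ζ^5 * x^3 * y^3 +
      (-1:F) * ζ^5 * x^4 * y^2 +
      (-10:F) * ζ^5 * x^5 * y^1 +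
      (1:F) * ζ^5 * x^6 +
      (8:F) * ζ^6 * y^6 +
      (-10:F) * ζ^6 * x^1 * y^5 +
      (20:F) * ζ^6 * x^2 * y^4 +
      (-36:F) * ζ^6 * x^3 * y^3 +
      (20:F) * ζ^6 * x^4 * y^2 +
      (-10:F) * ζ^6 * x^5 * y^1 +
      (8:F) * ζ^6 * x^6 +
      (-5:F) * ζ^7 * y^6 +
      (18:F) * ζ^7 * x^1 * y^5 +
      (-29:F) * ζ^7 * x^2 * y^4 +
      (32:F) * ζ^7 * x^3 * y^3 +
      (-29:F) * ζ^7 * x^4 * y^2 +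
      (18:F) * ζ^7 * x^5 * y^1 +
      (-5:F) * ζ^7 * x^6 +
      (1:F) * ζ^8 * y^6 +
      (-10:F) * ζ^8 * x^1 * y^5 +
      (20:F) * ζ^8 * x^2 * y^4 +
      (-22:F) * ζ^8 * x^3 * y^3 +
      (20:F) * ζ^8 * x^4 * y^2 +
      (-10:F) * ζ^8 * x^5 * y^1 +
      (1:F) * ζ^8 * x^6 +
      (2:F) * ζ^9 * x^1 * y^5 +
      (-7:F) * ζ^9 * x^2 * y^4 +
      (10:F) * ζ^9 * x^3 * y^3 +
      (-7:F) * ζ^9 * x^4 * y^2 +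
      (2:F) * ζ^9 * x^5 * y^1 +
      (1:F) * ζ^10 * x^2 * y^4 +
      (-2:F) * ζ^10 * x^3 * y^3 +
      (1:F) * ζ^10 * x^4 * y^2) * hrel
  constructor
  · convert key using 2 <;> ring
  · refine ⟨3 * (ξ.1 ^ 3 * d.1 ^ 3 - ξ.2 ^ 3 * d.2 ^ 3), ?_⟩
    rw [key]; ring
end

section
/- With θ_k = i^k α^{1/4} + c/(i^k α^{1/4}) as above, one has θ_k + θ_{k+1} = i^k β^{1/4} + 2c/(i^k β^{1/4}) where β = −4α and β^{1/4} = (1+i)α^{1/4}; in particular the sums of adjacent θ's are the roots of (θ² − 4c)² = −8a + 8c², exhibiting the 'mirror' quartic with Kummer datum (−4α, 2c). -/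
/-! The sum of two adjacent roots `θ_k + θ_{k+1}` is again of the form `u + e/u` with
`u = i^k (1 + i) α^{1/4}` and `e = 2c`, because `1 + i⁻¹ = 2/(1 + i)`. For any `t ≠ 0` the four
numbers `i^k t + e/(i^k t)` are the roots of `(x² − 2e)² = t⁴ + β' + 2e²` whenever `t⁴ β' = e⁴`:
the quartic factors as `(x² − σ₀²)(x² − σ₁²)` with `σ₂ = −σ₀`, `σ₃ = −σ₁`. Taking `t = (1 + i) α^{1/4}`,
so that `t⁴ = −4α`, and `β' = −4ᾱ` gives the mirror quartic, since `α + ᾱ = 2a` and `αᾱ = c⁴`. -/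

section

variable {F : Type*} [Field F]

def kummerRoot (i t e : F) (k : ℕ) : F := i ^ k * t + e / (i ^ k * t)

variable {i : F} (hi : i ^ 2 = -1)
include hi

lemma ne_zero_of_sq_eq_neg_one : i ≠ 0 := by
  rintro rfl
  simp at hi

lemma pow_four_of_sq_eq_neg_one : i ^ 4 = 1 := by
  linear_combination (i ^ 2 - 1) * hi

lemma one_add_pow_four_of_sq_eq_neg_one : (1 + i) ^ 4 = -4 := by
  linear_combination (i ^ 2 + 4 * i + 5) * hi

lemma one_add_ne_zero_of_sq_eq_neg_one (h2 : (2 : F) ≠ 0) : 1 + i ≠ 0 := by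
  intro h
  exact h2 (by linear_combination (1 - i) * h + hi)

lemma kummerRoot_mod_four (t e : F) (n : ℕ) : kummerRoot i t e (n % 4) = kummerRoot i t e n := by
  simp only [kummerRoot, ← pow_eq_pow_mod n (pow_four_of_sq_eq_neg_one hi)]

lemma kummerRoot_add_kummerRoot_succ (h1i : 1 + i ≠ 0) {r : F} (hr : r ≠ 0) (c : F) (k : ℕ) :
    kummerRoot i r c k + kummerRoot i r c (k + 1) = kummerRoot i ((1 + i) * r) (2 * c) k := by
  have hi0 := ne_zero_of_sq_eq_neg_one hi
  unfold kummerRoot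
  field_simp
  linear_combination i ^ k * c * hi

lemma kummer_quartic_eq_prod {t : F} (ht : t ≠ 0) {e β' : F} (hβ' : t ^ 4 * β' = e ^ 4) (x : F) :
    (x ^ 2 - 2 * e) ^ 2 - (t ^ 4 + β' + 2 * e ^ 2) = ∏ k : Fin 4, (x - kummerRoot i t e k) := by
  have hi0 := ne_zero_of_sq_eq_neg_one hi
  have hi3 : i ^ 3 = -i := by linear_combination i * hi
  simp only [Fin.prod_univ_four, kummerRoot, Fin.val_zero, Fin.val_one, Fin.val_two,
    show ((3 : Fin 4) : ℕ) = 3 from rfl, pow_zero, pow_one, hi, hi3]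
  field_simp
  simp only [hi]
  linear_combination hβ' - (x ^ 2 * t ^ 2 - (t ^ 2 + e) ^ 2) * x ^ 2 * t ^ 2 * hi

lemma kummer_quartic_iff {t : F} (ht : t ≠ 0) {e β' : F} (hβ' : t ^ 4 * β' = e ^ 4) (x : F) :
    (x ^ 2 - 2 * e) ^ 2 = t ^ 4 + β' + 2 * e ^ 2 ↔ ∃ k : Fin 4, x = kummerRoot i t e k := by
  rw [← sub_eq_zero, kummer_quartic_eq_prod hi ht hβ', Finset.prod_eq_zero_iff]
  simp only [Finset.mem_univ, true_and, sub_eq_zero]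

end

/-- with `θ_k = i^k α^{1/4} + c/(i^k α^{1/4})` as in the previous statement,
one has `θ_k + θ_{k+1} = i^k β^{1/4} + 2c/(i^k β^{1/4})` where `β = −4α` and
`β^{1/4} = (1+i) α^{1/4}`; in particular the sums of adjacent `θ`'s are precisely the
roots of `(θ² − 4c)² = −8a + 8c²`, exhibiting the mirror quartic with Kummer datum
`(−4α, 2c)`. -/
theorem stmt17 (F : Type*) [Field F] (h2 : (2 : F) ≠ 0)
    (D a b c : F) (s : F) (hs : s ^ 2 = -D)
    (hN : a ^ 2 + D * b ^ 2 = c ^ 4)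
    (r : F) (hr : r ^ 4 = a + b * s) (hr0 : r ≠ 0)
    (i : F) (hi : i ^ 2 = -1)
    (θ : Fin 4 → F) (hθ : ∀ k : Fin 4, θ k = i ^ (k : ℕ) * r + c / (i ^ (k : ℕ) * r)) :
    (((1 + i) * r) ^ 4 = -4 * (a + b * s)) ∧
    (∀ k : Fin 4, θ k + θ (k + 1) =
      i ^ (k : ℕ) * ((1 + i) * r) + 2 * c / (i ^ (k : ℕ) * ((1 + i) * r))) ∧
    (∀ x : F, (x ^ 2 - 4 * c) ^ 2 = -8 * a + 8 * c ^ 2 ↔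
      ∃ k : Fin 4, x = θ k + θ (k + 1)) := by
  have h1i := one_add_ne_zero_of_sq_eq_neg_one hi h2
  have hu : (1 + i) * r ≠ 0 := mul_ne_zero h1i hr0
  have hu4 : ((1 + i) * r) ^ 4 = -4 * (a + b * s) := by
    rw [mul_pow, one_add_pow_four_of_sq_eq_neg_one hi, hr]
  have hadj (k : Fin 4) : θ k + θ (k + 1) = kummerRoot i ((1 + i) * r) (2 * c) k := by
    rw [← kummerRoot_add_kummerRoot_succ hi h1i hr0, ← kummerRoot_mod_four hi r c (k + 1), hθ, hθ,
      Fin.val_add, Fin.val_one]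
    rfl
  refine ⟨hu4, hadj, fun x => ?_⟩
  have hnorm : ((1 + i) * r) ^ 4 * (-4 * (a - b * s)) = (2 * c) ^ 4 := by
    rw [hu4]
    linear_combination 16 * hN - 16 * b ^ 2 * hs
  have hquartic : (x ^ 2 - 4 * c) ^ 2 = -8 * a + 8 * c ^ 2 ↔
      (x ^ 2 - 2 * (2 * c)) ^ 2 = ((1 + i) * r) ^ 4 + -4 * (a - b * s) + 2 * (2 * c) ^ 2 := by
    rw [hu4]
    constructor <;> intro h <;> linear_combination h
  rw [hquartic, kummer_quartic_iff hi hu hnorm]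
  simp only [hadj]
end
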